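/- arXiv:1508.06724 — 4 statements merged into one kernel-verified Lean document; each statement's English description precedes it below -/
import Mathlib

section
/- Let F ⊆ K[x₁,…,xₙ] and let E ⊆ ℕⁿ be the set of all exponent vectors appearing with nonzero coefficient in some element of H_F = {ψ ∈ K[ξ] : f * ψ = 0 for all f ∈ F}. Then E is a lower set (order ideal) of ℕⁿ: if λ ∈ E and λⱼ ≥ 1, then λ − eⱼ ∈ E, where eⱼ is the j-th standard basis vector. -/
open MvPolynomial

noncomputable def contract {K : Type*} [Field K] {n : ℕ}
    (f ψ : MvPolynomial (Fin n) K) : MvPolynomial (Fin n) K :=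
  ∑ a ∈ f.support, ∑ l ∈ ψ.support,
    if a ≤ l then monomial (l - a) (f.coeff a * ψ.coeff l) else 0

/-- `H_S`: the algebraic local cohomology classes annihilated by all of `S`. -/
def Hset {K : Type*} [Field K] {n : ℕ} (S : Set (MvPolynomial (Fin n) K)) :
    Set (MvPolynomial (Fin n) K) :=
  {ψ | ∀ f ∈ S, contract f ψ = 0}

lemma coeff_contract {K : Type*} [Field K] {n : ℕ}
    (f ψ : MvPolynomial (Fin n) K) (m : Fin n →₀ ℕ) :
    (contract f ψ).coeff m = ∑ a ∈ f.support, f.coeff a * ψ.coeff (m + a) := by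
  unfold contract
  rw [MvPolynomial.coeff_sum]
  refine Finset.sum_congr rfl fun a _ => ?_
  rw [MvPolynomial.coeff_sum, Finset.sum_eq_single (m + a)]
  · rw [if_pos le_add_self, add_tsub_cancel_right, coeff_monomial, if_pos rfl]
  · intro l hl hne
    split_ifs with h
    · rw [coeff_monomial, if_neg]
      intro he
      exact hne (by rw [← he, tsub_add_cancel_of_le h])
    · simp
  · intro h
    rw [if_pos le_add_self, add_tsub_cancel_right, coeff_monomial, if_pos rfl,
      MvPolynomial.notMem_support_iff.mp h, mul_zero]

lemma coeff_contract_X {K : Type*} [Field K] {n : ℕ}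
    (j : Fin n) (ψ : MvPolynomial (Fin n) K) (m : Fin n →₀ ℕ) :
    (contract (X j) ψ).coeff m = ψ.coeff (m + Finsupp.single j 1) := by
  rw [coeff_contract, MvPolynomial.support_X, Finset.sum_singleton,
    MvPolynomial.coeff_X', if_pos rfl, one_mul]

theorem Hset_support_lowerSet
    {K : Type*} [Field K] {n : ℕ} (F : Set (MvPolynomial (Fin n) K)) :
    ∀ l ∈ {l : Fin n →₀ ℕ | ∃ ψ ∈ Hset F, l ∈ ψ.support},
      ∀ j : Fin n, 1 ≤ l j →
        l - Finsupp.single j 1 ∈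
          {l : Fin n →₀ ℕ | ∃ ψ ∈ Hset F, l ∈ ψ.support} := by
  rintro l ⟨ψ, hψ, hl⟩ j hj
  refine ⟨contract (X j) ψ, ?_, ?_⟩
  · intro f hf
    ext m
    rw [coeff_contract, coeff_zero]
    calc ∑ a ∈ f.support, f.coeff a * (contract (X j) ψ).coeff (m + a)
        = ∑ a ∈ f.support, f.coeff a * ψ.coeff (m + Finsupp.single j 1 + a) := by
          refine Finset.sum_congr rfl fun a _ => ?_
          rw [coeff_contract_X]
          rw [add_right_comm]
      _ = (contract f ψ).coeff (m + Finsupp.single j 1) := (coeff_contract f ψ _).symm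
      _ = 0 := by rw [hψ f hf, coeff_zero]
  · rw [MvPolynomial.mem_support_iff, coeff_contract_X,
      tsub_add_cancel_of_le (Finsupp.single_le_iff.mpr hj),
      ← MvPolynomial.mem_support_iff]
    exact hl
end

section
/- Let I ⊆ K[x₁,…,xₙ] be a monomial ideal. Then for every α ∈ ℕⁿ, x^α ∈ I if and only if res(x^α, ψ) = 0 for all ψ ∈ H_I, where res(h, ψ) is the constant coefficient of h * ψ. (Nondegeneracy of the local duality pairing for monomial ideals.) -/
open MvPolynomial

theorem monomial_mem_iff_res_vanishes
    {K : Type*} [Field K] {n : ℕ} (I : Ideal (MvPolynomial (Fin n) K))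
    (hmono : ∃ S : Set (Fin n →₀ ℕ),
      I = Ideal.span ((fun a => monomial a (1 : K)) '' S)) :
    ∀ a : Fin n →₀ ℕ,
      monomial a (1 : K) ∈ I ↔
        ∀ ψ ∈ Hset (I : Set (MvPolynomial (Fin n) K)),
          coeff 0 (contract (monomial a (1 : K)) ψ) = 0 := by
  obtain ⟨S, rfl⟩ := hmono
  intro a
  constructor
  · intro ha ψ hψ
    rw [hψ _ ha, coeff_zero]
  · intro h
    by_contra hna
    have hsupp : (monomial a (1 : K)).support = {a} :=
      by classical rw [support_monomial, if_neg one_ne_zero]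
    have key : (monomial a (1 : K)) ∈
        Hset ((Ideal.span ((fun a => monomial a (1 : K)) '' S) :
          Ideal (MvPolynomial (Fin n) K)) : Set (MvPolynomial (Fin n) K)) := by
      intro f hf
      unfold contract
      rw [hsupp]
      apply Finset.sum_eq_zero
      intro b hb
      rw [Finset.sum_singleton, if_neg]
      intro hba
      apply hna
      rw [mem_ideal_span_monomial_image]
      intro xi hxi
      rw [hsupp, Finset.mem_singleton] at hxi
      subst hxi
      obtain ⟨s, hs, hsb⟩ := mem_ideal_span_monomial_image.mp hf b hb
      exact ⟨s, hs, hsb.trans hba⟩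
    have h0 := h _ key
    unfold contract at h0
    rw [hsupp] at h0
    simp [coeff_monomial] at h0
end

section
/- Let f = x₁⁴ + 2x₁²x₂² + x₂⁴ ∈ K[x₁,x₂] (the parameter value t = 2), with K a field of characteristic 0, and set f₁ = ∂f/∂x₁ = 4x₁³ + 4x₁x₂², f₂ = ∂f/∂x₂ = 4x₁²x₂ + 4x₂³. Then for every even k ≥ 4 the element ψ_k = Σ_{i=0}^{k/2} (−1)^i ξ₁^{k−2i} ξ₂^{2i} satisfies f₁ * ψ_k = 0 and f₂ * ψ_k = 0; consequently H_{f₁,f₂} is an infinite-dimensional K-vector space. -/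
open MvPolynomial

noncomputable def e (a b : ℕ) : Fin 2 →₀ ℕ := Finsupp.single 0 a + Finsupp.single 1 b

lemma e_apply0 (a b : ℕ) : e a b 0 = a := by simp [e, Finsupp.single_apply]
lemma e_apply1 (a b : ℕ) : e a b 1 = b := by simp [e, Finsupp.single_apply]

lemma e_le {a b c d : ℕ} : e a b ≤ e c d ↔ a ≤ c ∧ b ≤ d := by
  constructor
  · intro h
    exact ⟨by simpa [e_apply0] using h 0, by simpa [e_apply1] using h 1⟩
  · rintro ⟨h1, h2⟩ i
    fin_cases i <;> simp [e_apply0, e_apply1, h1, h2]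

lemma e_sub (a b c d : ℕ) : e a b - e c d = e (a - c) (b - d) := by
  ext i
  fin_cases i <;> simp [Finsupp.tsub_apply, e_apply0, e_apply1]

lemma e_inj {a b c d : ℕ} : e a b = e c d ↔ a = c ∧ b = d := by
  constructor
  · intro h
    exact ⟨by rw [← e_apply0 a b, h, e_apply0], by rw [← e_apply1 a b, h, e_apply1]⟩
  · rintro ⟨rfl, rfl⟩; rfl

lemma contract_eq_sum {K : Type*} [Field K] {n : ℕ} (f ψ : MvPolynomial (Fin n) K)
    (sf sψ : Finset ((Fin n) →₀ ℕ)) (hf : f.support ⊆ sf) (hψ : ψ.support ⊆ sψ) :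
    contract f ψ = ∑ a ∈ sf, ∑ l ∈ sψ,
      if a ≤ l then monomial (l - a) (f.coeff a * ψ.coeff l) else 0 := by
  unfold contract
  have inner : ∀ a, (∑ l ∈ ψ.support,
      if a ≤ l then monomial (l - a) (f.coeff a * ψ.coeff l) else 0)
      = ∑ l ∈ sψ, if a ≤ l then monomial (l - a) (f.coeff a * ψ.coeff l) else 0 := by
    intro a
    refine Finset.sum_subset hψ fun l _ hl => ?_
    rw [notMem_support_iff.mp hl]; simp
  simp_rw [inner]
  refine Finset.sum_subset hf fun a _ ha => ?_
  refine Finset.sum_eq_zero fun l _ => ?_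
  rw [notMem_support_iff.mp ha]; simp

/-- abbreviation for ψ with k = m + m -/
noncomputable def Psi (K : Type*) [Field K] (m : ℕ) : MvPolynomial (Fin 2) K :=
  ∑ i ∈ Finset.range (m + 1), monomial (e (m + m - 2 * i) (2 * i)) ((-1 : K) ^ i)

lemma psi_coeff {K : Type*} [Field K] (m i : ℕ) (hi : i ≤ m) :
    coeff (e (m + m - 2 * i) (2 * i)) (Psi K m) = (-1 : K) ^ i := by
  unfold Psi
  rw [coeff_sum]
  simp_rw [coeff_monomial]
  have : ∀ j ∈ Finset.range (m + 1),
      (if e (m + m - 2 * j) (2 * j) = e (m + m - 2 * i) (2 * i) then ((-1 : K) ^ j) else 0)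
      = if j = i then (-1 : K) ^ j else 0 := by
    intro j hj
    simp only [Finset.mem_range] at hj
    have : (e (m + m - 2 * j) (2 * j) = e (m + m - 2 * i) (2 * i)) ↔ j = i := by
      rw [e_inj]; omega
    simp only [this]
  rw [Finset.sum_congr rfl this, Finset.sum_ite_eq' _ i]
  rw [if_pos (Finset.mem_range.mpr (by omega))]

lemma psi_support {K : Type*} [Field K] (m : ℕ) :
    (Psi K m).support ⊆ (Finset.range (m + 1)).image (fun j => e (m + m - 2 * j) (2 * j)) := by
  refine MvPolynomial.support_sum.trans ?_
  refine Finset.biUnion_subset.mpr fun j hj => ?_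
  refine support_monomial_subset.trans ?_
  simp only [Finset.singleton_subset_iff]
  exact Finset.mem_image_of_mem _ hj

lemma psi_inj (m : ℕ) : ∀ x ∈ Finset.range (m + 1), ∀ y ∈ Finset.range (m + 1),
    e (m + m - 2 * x) (2 * x) = e (m + m - 2 * y) (2 * y) → x = y := by
  intro a _ b _ h
  rw [e_inj] at h
  omega

lemma key1 {K : Type*} [Field K] (m : ℕ) (hm : 2 ≤ m) :
    contract (C 4 * X 0 ^ 3 + C 4 * X 0 * X 1 ^ 2 : MvPolynomial (Fin 2) K) (Psi K m) = 0 := by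
  set f : MvPolynomial (Fin 2) K := C 4 * X 0 ^ 3 + C 4 * X 0 * X 1 ^ 2 with hf
  have hrep : f = monomial (e 3 0) 4 + monomial (e 1 2) 4 := by
    rw [hf]
    simp only [e, X_pow_eq_monomial, C_mul_monomial, X, monomial_mul,
      monomial_pow, one_pow, mul_one, one_mul, Finsupp.single_zero, add_zero]
    norm_num [Finsupp.smul_single]
  have hne : e 3 0 ≠ e 1 2 := by simp [e_inj]
  have hsupf : f.support ⊆ {e 3 0, e 1 2} := by
    rw [hrep]
    refine support_add.trans (Finset.union_subset ?_ ?_) <;>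
      refine support_monomial_subset.trans ?_ <;> simp
  have hc1 : coeff (e 3 0) f = 4 := by rw [hrep]; simp [coeff_monomial, e_inj]
  have hc2 : coeff (e 1 2) f = 4 := by rw [hrep]; simp [coeff_monomial, e_inj]
  rw [contract_eq_sum f (Psi K m) _ _ hsupf (psi_support m)]
  rw [Finset.sum_pair hne, Finset.sum_image (psi_inj m), Finset.sum_image (psi_inj m)]
  have h1 : ∀ i ∈ Finset.range (m + 1),
      (if e 3 0 ≤ e (m + m - 2 * i) (2 * i) then
        monomial (e (m + m - 2 * i) (2 * i) - e 3 0)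
          (f.coeff (e 3 0) * (Psi K m).coeff (e (m + m - 2 * i) (2 * i))) else 0)
      = if 3 ≤ m + m - 2 * i then
          monomial (e (m + m - 2 * i - 3) (2 * i)) ((4 : K) * (-1) ^ i) else 0 := by
    intro i hi
    rw [hc1, psi_coeff m i (by simpa using Nat.lt_succ_iff.mp (Finset.mem_range.mp hi)),
      e_sub]
    simp [e_le]
  have h2 : ∀ i ∈ Finset.range (m + 1),
      (if e 1 2 ≤ e (m + m - 2 * i) (2 * i) then
        monomial (e (m + m - 2 * i) (2 * i) - e 1 2)
          (f.coeff (e 1 2) * (Psi K m).coeff (e (m + m - 2 * i) (2 * i))) else 0)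
      = if 1 ≤ m + m - 2 * i ∧ 2 ≤ 2 * i then
          monomial (e (m + m - 2 * i - 1) (2 * i - 2)) ((4 : K) * (-1) ^ i) else 0 := by
    intro i hi
    rw [hc2, psi_coeff m i (by simpa using Nat.lt_succ_iff.mp (Finset.mem_range.mp hi)),
      e_sub]
    simp [e_le]
  rw [Finset.sum_congr rfl h1, Finset.sum_congr rfl h2]
  rw [Finset.sum_range_succ, Finset.sum_range_succ']
  rw [if_neg (by omega : ¬ 3 ≤ m + m - 2 * m), if_neg (by omega : ¬ (1 ≤ m + m - 2 * 0 ∧ 2 ≤ 2 * 0))]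
  rw [add_zero, add_zero, ← Finset.sum_add_distrib]
  refine Finset.sum_eq_zero fun i hi => ?_
  simp only [Finset.mem_range] at hi
  by_cases h : 3 ≤ m + m - 2 * i
  · rw [if_pos h, if_pos (by omega : 1 ≤ m + m - 2 * (i + 1) ∧ 2 ≤ 2 * (i + 1))]
    have hexp : e (m + m - 2 * (i + 1) - 1) (2 * (i + 1) - 2) = e (m + m - 2 * i - 3) (2 * i) := by
      rw [e_inj]; omega
    rw [hexp, ← map_add]
    have : (4 : K) * (-1) ^ i + 4 * (-1) ^ (i + 1) = 0 := by rw [pow_succ]; ring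
    rw [this, map_zero]
  · rw [if_neg h, if_neg (fun hc => h (by omega))]
    simp

lemma key2 {K : Type*} [Field K] (m : ℕ) (hm : 2 ≤ m) :
    contract (C 4 * X 0 ^ 2 * X 1 + C 4 * X 1 ^ 3 : MvPolynomial (Fin 2) K) (Psi K m) = 0 := by
  set f : MvPolynomial (Fin 2) K := C 4 * X 0 ^ 2 * X 1 + C 4 * X 1 ^ 3 with hf
  have hrep : f = monomial (e 2 1) 4 + monomial (e 0 3) 4 := by
    rw [hf]
    simp only [e, X_pow_eq_monomial, C_mul_monomial, X, monomial_mul,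
      monomial_pow, one_pow, mul_one, one_mul, Finsupp.single_zero, zero_add]
    norm_num [Finsupp.smul_single]
  have hne : e 2 1 ≠ e 0 3 := by simp [e_inj]
  have hsupf : f.support ⊆ {e 2 1, e 0 3} := by
    rw [hrep]
    refine support_add.trans (Finset.union_subset ?_ ?_) <;>
      refine support_monomial_subset.trans ?_ <;> simp
  have hc1 : coeff (e 2 1) f = 4 := by rw [hrep]; simp [coeff_monomial, e_inj]
  have hc2 : coeff (e 0 3) f = 4 := by rw [hrep]; simp [coeff_monomial, e_inj]
  rw [contract_eq_sum f (Psi K m) _ _ hsupf (psi_support m)]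
  rw [Finset.sum_pair hne, Finset.sum_image (psi_inj m), Finset.sum_image (psi_inj m)]
  have h1 : ∀ i ∈ Finset.range (m + 1),
      (if e 2 1 ≤ e (m + m - 2 * i) (2 * i) then
        monomial (e (m + m - 2 * i) (2 * i) - e 2 1)
          (f.coeff (e 2 1) * (Psi K m).coeff (e (m + m - 2 * i) (2 * i))) else 0)
      = if 2 ≤ m + m - 2 * i ∧ 1 ≤ 2 * i then
          monomial (e (m + m - 2 * i - 2) (2 * i - 1)) ((4 : K) * (-1) ^ i) else 0 := by
    intro i hi
    rw [hc1, psi_coeff m i (by simpa using Nat.lt_succ_iff.mp (Finset.mem_range.mp hi)),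
      e_sub]
    simp [e_le]
  have h2 : ∀ i ∈ Finset.range (m + 1),
      (if e 0 3 ≤ e (m + m - 2 * i) (2 * i) then
        monomial (e (m + m - 2 * i) (2 * i) - e 0 3)
          (f.coeff (e 0 3) * (Psi K m).coeff (e (m + m - 2 * i) (2 * i))) else 0)
      = if 3 ≤ 2 * i then
          monomial (e (m + m - 2 * i) (2 * i - 3)) ((4 : K) * (-1) ^ i) else 0 := by
    intro i hi
    rw [hc2, psi_coeff m i (by simpa using Nat.lt_succ_iff.mp (Finset.mem_range.mp hi)),
      e_sub]
    simp [e_le]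
  rw [Finset.sum_congr rfl h1, Finset.sum_congr rfl h2]
  rw [Finset.sum_range_succ, Finset.sum_range_succ']
  rw [if_neg (by omega : ¬ (2 ≤ m + m - 2 * m ∧ 1 ≤ 2 * m)),
    if_neg (by omega : ¬ 3 ≤ 2 * 0)]
  rw [add_zero, add_zero, ← Finset.sum_add_distrib]
  refine Finset.sum_eq_zero fun i hi => ?_
  simp only [Finset.mem_range] at hi
  by_cases h : 1 ≤ i
  · rw [if_pos (by omega : 2 ≤ m + m - 2 * i ∧ 1 ≤ 2 * i), if_pos (by omega : 3 ≤ 2 * (i + 1))]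
    have hexp : e (m + m - 2 * (i + 1)) (2 * (i + 1) - 3) = e (m + m - 2 * i - 2) (2 * i - 1) := by
      rw [e_inj]; omega
    rw [hexp, ← map_add]
    have : (4 : K) * (-1) ^ i + 4 * (-1) ^ (i + 1) = 0 := by rw [pow_succ]; ring
    rw [this, map_zero]
  · rw [if_neg (fun hc => h (by omega)), if_neg (by omega : ¬ 3 ≤ 2 * (i + 1))]
    simp

lemma psi_coeff_diag {K : Type*} [Field K] (m n : ℕ) :
    coeff (e (n + n) 0) (Psi K m) = if m = n then 1 else 0 := by
  unfold Psi
  rw [coeff_sum]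
  simp_rw [coeff_monomial]
  have h : ∀ j ∈ Finset.range (m + 1),
      (if e (m + m - 2 * j) (2 * j) = e (n + n) 0 then ((-1 : K) ^ j) else 0)
      = if j = 0 then (if m = n then (1 : K) else 0) else 0 := by
    intro j hj
    simp only [Finset.mem_range] at hj
    have hiff : (e (m + m - 2 * j) (2 * j) = e (n + n) 0) ↔ (j = 0 ∧ m = n) := by
      rw [e_inj]; omega
    simp only [hiff]
    by_cases h0 : j = 0
    · subst h0; simp
    · simp [h0]
  rw [Finset.sum_congr rfl h, Finset.sum_ite_eq' _ 0]
  rw [if_pos (Finset.mem_range.mpr (by omega))]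

lemma psi_li {K : Type*} [Field K] : LinearIndependent K (fun n => Psi K (n + 2)) := by
  rw [linearIndependent_iff']
  intro s g hsum n hn
  have h := congrArg (coeff (e ((n + 2) + (n + 2)) 0)) hsum
  rw [coeff_sum, coeff_zero] at h
  have h2 : ∀ i ∈ s, coeff (e ((n + 2) + (n + 2)) 0) (g i • Psi K (i + 2))
      = if i = n then g i else 0 := by
    intro i _
    rw [coeff_smul, psi_coeff_diag, smul_ite, smul_eq_mul, mul_one, smul_zero]
    congr 1
    simp
  rw [Finset.sum_congr rfl h2, Finset.sum_ite_eq' _ n, if_pos hn] at h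
  exact h

theorem infinite_dimensional_example
    {K : Type*} [Field K] [CharZero K] :
    let f₁ : MvPolynomial (Fin 2) K := C 4 * X 0 ^ 3 + C 4 * X 0 * X 1 ^ 2
    let f₂ : MvPolynomial (Fin 2) K := C 4 * X 0 ^ 2 * X 1 + C 4 * X 1 ^ 3
    let ψ : ℕ → MvPolynomial (Fin 2) K := fun k =>
      ∑ i ∈ Finset.range (k / 2 + 1),
        monomial (Finsupp.single 0 (k - 2 * i) + Finsupp.single 1 (2 * i))
          ((-1 : K) ^ i)
    (∀ k : ℕ, 4 ≤ k → Even k → contract f₁ (ψ k) = 0 ∧ contract f₂ (ψ k) = 0) ∧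
    ¬ FiniteDimensional K (Submodule.span K (Hset {f₁, f₂})) := by
  intro f₁ f₂ ψ
  have hψ : ∀ m : ℕ, ψ (m + m) = Psi K m := by
    intro m
    show (∑ i ∈ Finset.range ((m + m) / 2 + 1),
      monomial (Finsupp.single 0 (m + m - 2 * i) + Finsupp.single 1 (2 * i)) ((-1 : K) ^ i)) = _
    rw [show (m + m) / 2 = m by omega]
    rfl
  constructor
  · intro k hk hek
    obtain ⟨m, rfl⟩ := hek
    rw [hψ m]
    exact ⟨key1 m (by omega), key2 m (by omega)⟩
  · intro hFD
    have hmem : ∀ n : ℕ, Psi K (n + 2) ∈ Hset {f₁, f₂} := by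
      intro n f hf
      rcases hf with rfl | rfl
      · exact key1 _ (by omega)
      · exact key2 _ (by omega)
    refine Module.Finite.not_linearIndependent_of_infinite (R := K)
      (fun n : ℕ => (⟨Psi K (n + 2), Submodule.subset_span (hmem n)⟩ :
        Submodule.span K (Hset {f₁, f₂}))) ?_
    refine LinearIndependent.of_comp (Submodule.span K (Hset {f₁, f₂})).subtype ?_
    exact psi_li
end

section
/- Fix the total degree lexicographic order ≺ on ℕⁿ. Let F ⊆ K[x₁,…,xₙ] with H_F finite-dimensional, and let Λ_F ⊆ ℕⁿ be the set of head-term exponents of nonzero elements of H_F with respect to ≺. Then the complement C = ℕⁿ \ Λ_F is an upper set of ℕⁿ (if α ∈ C and α ≤ β componentwise then β ∈ C); equivalently, if a monomial ξ^τ is not the head term of any element of H_F, then no multiple ξ^τ·ξ^δ is the head term of any element of H_F. -/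
open MvPolynomial

/-- Total degree lexicographic order on exponent vectors: smaller total degree,
or equal total degree and lexicographically smaller. -/
def degLexLT {n : ℕ} (a b : Fin n →₀ ℕ) : Prop :=
  (∑ i : Fin n, a i) < (∑ i : Fin n, b i) ∨
  ((∑ i : Fin n, a i) = (∑ i : Fin n, b i) ∧
    ∃ j : Fin n, (∀ i : Fin n, i < j → a i = b i) ∧ a j < b j)

/-- `l` is the exponent of the head term of `ψ` w.r.t. `degLexLT`. -/
def IsHeadExp {K : Type*} [Field K] {n : ℕ}
    (ψ : MvPolynomial (Fin n) K) (l : Fin n →₀ ℕ) : Prop :=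
  l ∈ ψ.support ∧ ∀ m ∈ ψ.support, m ≠ l → degLexLT m l

/-- The set of head-term exponents of nonzero elements of `H_F`. -/
def headExps {K : Type*} [Field K] {n : ℕ} (F : Set (MvPolynomial (Fin n) K)) :
    Set (Fin n →₀ ℕ) :=
  {l | ∃ ψ ∈ Hset F, ψ ≠ 0 ∧ IsHeadExp ψ l}

lemma coeff_contract_monomial {K : Type*} [Field K] {n : ℕ}
    (δ : Fin n →₀ ℕ) (ψ : MvPolynomial (Fin n) K) (m : Fin n →₀ ℕ) :
    (contract (monomial δ (1 : K)) ψ).coeff m = ψ.coeff (m + δ) := by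
  rw [coeff_contract]
  have hs : (monomial δ (1 : K)).support = {δ} := by
    classical simp [MvPolynomial.support_monomial]
  rw [hs, Finset.sum_singleton, MvPolynomial.coeff_monomial, if_pos rfl, one_mul]

lemma contract_monomial_mem_Hset {K : Type*} [Field K] {n : ℕ}
    {F : Set (MvPolynomial (Fin n) K)} {ψ : MvPolynomial (Fin n) K}
    (hψ : ψ ∈ Hset F) (δ : Fin n →₀ ℕ) :
    contract (monomial δ (1 : K)) ψ ∈ Hset F := by
  intro f hf
  have h0 := hψ f hf
  ext m
  rw [MvPolynomial.coeff_zero, coeff_contract]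
  have : ∀ x ∈ f.support,
      f.coeff x * (contract (monomial δ (1:K)) ψ).coeff (m + x)
      = f.coeff x * ψ.coeff (m + δ + x) := by
    intro x _
    rw [coeff_contract_monomial, add_right_comm]
  rw [Finset.sum_congr rfl this, ← coeff_contract, h0, MvPolynomial.coeff_zero]

lemma degLexLT_cancel {n : ℕ} {m a δ : Fin n →₀ ℕ}
    (h : degLexLT (m + δ) (a + δ)) : degLexLT m a := by
  simp only [degLexLT, Finsupp.add_apply, Finset.sum_add_distrib] at h ⊢
  rcases h with h | ⟨he, j, heq, hj⟩
  · left; omega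
  · right
    exact ⟨by omega, j, fun i hi => by have := heq i hi; omega, by omega⟩

theorem headExps_compl_upperSet
    {K : Type*} [Field K] {n : ℕ} (F : Set (MvPolynomial (Fin n) K))
    (hfin : FiniteDimensional K (Submodule.span K (Hset F))) :
    ∀ a : Fin n →₀ ℕ, a ∉ headExps F →
      ∀ b : Fin n →₀ ℕ, a ≤ b → b ∉ headExps F := by
  intro a ha b hab hb
  apply ha
  obtain ⟨ψ, hψF, hψ0, hbsupp, hmax⟩ := hb
  set δ := b - a with hδ
  have hba : a + δ = b := add_tsub_cancel_of_le hab
  set χ := contract (monomial δ (1 : K)) ψ with hχ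
  have hcoeff : ∀ m, χ.coeff m = ψ.coeff (m + δ) := fun m => coeff_contract_monomial δ ψ m
  have hasupp : a ∈ χ.support := by
    rw [MvPolynomial.mem_support_iff, hcoeff, hba]
    exact MvPolynomial.mem_support_iff.mp hbsupp
  refine ⟨χ, contract_monomial_mem_Hset hψF δ, ?_, hasupp, ?_⟩
  · intro h0
    rw [h0] at hasupp
    simp at hasupp
  · intro m hm hma
    have hm' : m + δ ∈ ψ.support := by
      rw [MvPolynomial.mem_support_iff, ← hcoeff]
      exact MvPolynomial.mem_support_iff.mp hm
    have hne : m + δ ≠ b := by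
      rw [← hba]
      intro h
      exact hma (add_right_cancel h)
    have := hmax (m + δ) hm' hne
    rw [← hba] at this
    exact degLexLT_cancel this
end
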